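/- Let d, m ≥ 1, L > 0, r ≥ 0, 0 ≤ ρ ≤ r, and suppose f : ℝ^d → ℝ^d satisfies |f(x)| ≤ L(1+|x|^{2r+1}) and g : ℝ^d → ℝ^{d×m} satisfies ‖g(x)‖ ≤ L(1+|x|^ρ) for all x ∈ ℝ^d. Then there exists a constant C depending only on L, r and ρ such that for all h > 0 and all x ∈ ℝ^d, the modified Euler scheme (MES) coefficients satisfy |f̄_h(x) − f(x)| ≤ C h(1+|x|^{6r+3}) and ‖ḡ_h(x) − g(x)‖ ≤ C h(1+|x|^{4r+ρ+2}). -/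

import Mathlib

/-! Since `1 - 1/(1+s) ≤ s`, the taming factor moves any vector `v` by at most `h|f(x)|²|v|`.
With the growth bounds this is `h L³ (1+|x|^p)²(1+|x|^q)` for `p = 2r+1` and `q ∈ {p, ρ}`,
and `(1+a^p)(1+a^q) ≤ 2(1+a^(p+q))` collapses the product of weights into one weight. -/

open Real

lemma norm_inv_one_add_smul_sub_le {E : Type*} [NormedAddCommGroup E] [NormedSpace ℝ E]
    {s : ℝ} (hs : 0 ≤ s) (v : E) : ‖(1 + s)⁻¹ • v - v‖ ≤ s * ‖v‖ := by
  have hs1 : 0 < 1 + s := by positivity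
  have hcoef : |(1 + s)⁻¹ - 1| ≤ s := by
    rw [abs_sub_comm, abs_le]
    constructor
    · nlinarith [inv_le_one_of_one_le₀ (by linarith : (1 : ℝ) ≤ 1 + s)]
    · nlinarith [mul_inv_cancel₀ hs1.ne', inv_nonneg.2 hs1.le]
  calc ‖(1 + s)⁻¹ • v - v‖ = |(1 + s)⁻¹ - 1| * ‖v‖ := by
        rw [← Real.norm_eq_abs, ← norm_smul, sub_smul, one_smul]
    _ ≤ s * ‖v‖ := by gcongr

lemma one_add_rpow_mul_one_add_rpow_le {a p q : ℝ} (ha : 0 ≤ a) (hp : 0 ≤ p) (hq : 0 ≤ q) :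
    (1 + a ^ p) * (1 + a ^ q) ≤ 2 * (1 + a ^ (p + q)) := by
  rw [rpow_add_of_nonneg ha hp hq]
  have hsame : 0 ≤ (1 - a ^ p) * (1 - a ^ q) := by
    rcases le_total a 1 with h1 | h1
    · exact mul_nonneg (sub_nonneg.2 (rpow_le_one ha h1 hp)) (sub_nonneg.2 (rpow_le_one ha h1 hq))
    · exact mul_nonneg_of_nonpos_of_nonpos (sub_nonpos.2 (one_le_rpow h1 hp))
        (sub_nonpos.2 (one_le_rpow h1 hq))
  nlinarith

lemma sq_mul_le_of_le_one_add_rpow {a p q L U V : ℝ} (ha : 0 ≤ a) (hp : 0 ≤ p) (hq : 0 ≤ q)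
    (hL : 0 ≤ L) (hU0 : 0 ≤ U) (hU : U ≤ L * (1 + a ^ p)) (hV0 : 0 ≤ V)
    (hV : V ≤ L * (1 + a ^ q)) :
    U ^ 2 * V ≤ 4 * L ^ 3 * (1 + a ^ (2 * p + q)) := by
  have hpp := one_add_rpow_mul_one_add_rpow_le ha hp hp
  have hppq := one_add_rpow_mul_one_add_rpow_le ha (add_nonneg hp hp) hq
  have hwq : 0 ≤ 1 + a ^ q := by positivity
  calc U ^ 2 * V ≤ (L * (1 + a ^ p)) ^ 2 * (L * (1 + a ^ q)) := by gcongr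
    _ = L ^ 3 * ((1 + a ^ p) * (1 + a ^ p) * (1 + a ^ q)) := by ring
    _ ≤ L ^ 3 * (2 * (1 + a ^ (p + p)) * (1 + a ^ q)) := by gcongr
    _ ≤ L ^ 3 * (2 * (2 * (1 + a ^ (p + p + q)))) :=
        mul_le_mul_of_nonneg_left (by rw [mul_assoc]; linarith) (by positivity)
    _ = 4 * L ^ 3 * (1 + a ^ (2 * p + q)) := by rw [← two_mul]; ring

/-- `ℝ^{d×m}` is modelled as `EuclideanSpace ℝ (Fin d × Fin m)` (Frobenius norm). -/
theorem mes_modification_error_general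
    (L r ρ : ℝ) (hL : 0 < L) (hr : 0 ≤ r) (hρ0 : 0 ≤ ρ) :
    ∃ C : ℝ, 0 < C ∧ ∀ (d m : ℕ), 1 ≤ d → 1 ≤ m →
      ∀ (f : EuclideanSpace ℝ (Fin d) → EuclideanSpace ℝ (Fin d))
        (g : EuclideanSpace ℝ (Fin d) → EuclideanSpace ℝ (Fin d × Fin m)),
      (∀ x, ‖f x‖ ≤ L * (1 + ‖x‖ ^ (2 * r + 1))) →
      (∀ x, ‖g x‖ ≤ L * (1 + ‖x‖ ^ ρ)) →
      ∀ h : ℝ, 0 < h → ∀ x : EuclideanSpace ℝ (Fin d),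
        ‖(1 + h * ‖f x‖ ^ 2)⁻¹ • f x - f x‖ ≤ C * h * (1 + ‖x‖ ^ (6 * r + 3)) ∧
        ‖(1 + h * ‖f x‖ ^ 2)⁻¹ • g x - g x‖ ≤ C * h * (1 + ‖x‖ ^ (4 * r + ρ + 2)) := by
  refine ⟨4 * L ^ 3, by positivity, fun d m _ _ f g hf hg h hh x => ?_⟩
  have hp : 0 ≤ 2 * r + 1 := by positivity
  have modification_le : ∀ {E : Type} [NormedAddCommGroup E] [NormedSpace ℝ E] (v : E) (q : ℝ),
      0 ≤ q → ‖v‖ ≤ L * (1 + ‖x‖ ^ q) →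
      ‖(1 + h * ‖f x‖ ^ 2)⁻¹ • v - v‖ ≤ 4 * L ^ 3 * h * (1 + ‖x‖ ^ (2 * (2 * r + 1) + q)) :=
    fun v q hq hv => calc
      _ ≤ h * ‖f x‖ ^ 2 * ‖v‖ := norm_inv_one_add_smul_sub_le (by positivity) v
      _ = h * (‖f x‖ ^ 2 * ‖v‖) := by ring
      _ ≤ h * (4 * L ^ 3 * (1 + ‖x‖ ^ (2 * (2 * r + 1) + q))) :=
        mul_le_mul_of_nonneg_left (sq_mul_le_of_le_one_add_rpow (norm_nonneg x) hp hq hL.le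
          (norm_nonneg _) (hf x) (norm_nonneg v) hv) hh.le
      _ = _ := by ring
  constructor
  · convert modification_le (f x) _ hp (hf x) using 4; ring
  · convert modification_le (g x) ρ hρ0 (hg x) using 4; ring

/-- Modification-error bounds for the modified Euler scheme (MES): the coefficients
`f̄_h(x) = f(x)/(1+h|f(x)|²)`, `ḡ_h(x) = g(x)/(1+h|f(x)|²)` differ from `f`, `g`
by `O(h)` with polynomial weights.
`ℝ^{d×m}` is modelled as `EuclideanSpace ℝ (Fin d × Fin m)` (Frobenius norm). -/
theorem mes_modification_error
    (L r ρ : ℝ) (hL : 0 < L) (hr : 0 ≤ r) (hρ0 : 0 ≤ ρ) (hρr : ρ ≤ r) :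
    ∃ C : ℝ, 0 < C ∧ ∀ (d m : ℕ), 1 ≤ d → 1 ≤ m →
      ∀ (f : EuclideanSpace ℝ (Fin d) → EuclideanSpace ℝ (Fin d))
        (g : EuclideanSpace ℝ (Fin d) → EuclideanSpace ℝ (Fin d × Fin m)),
      (∀ x, ‖f x‖ ≤ L * (1 + ‖x‖ ^ (2 * r + 1))) →
      (∀ x, ‖g x‖ ≤ L * (1 + ‖x‖ ^ ρ)) →
      ∀ h : ℝ, 0 < h → ∀ x : EuclideanSpace ℝ (Fin d),
        ‖(1 + h * ‖f x‖ ^ 2)⁻¹ • f x - f x‖ ≤ C * h * (1 + ‖x‖ ^ (6 * r + 3)) ∧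
        ‖(1 + h * ‖f x‖ ^ 2)⁻¹ • g x - g x‖ ≤ C * h * (1 + ‖x‖ ^ (4 * r + ρ + 2)) :=
  mes_modification_error_general L r ρ hL hr hρ0
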